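/- Let S be a fundamental countable Boolean inverse ∧-monoid. If S is 0-simplifying then either S is a Tarski monoid or S is isomorphic to a finite symmetric inverse monoid I_n (the inverse monoid of all partial bijections between subsets of a finite set {1, ..., n} under composition). -/

import Mathlib

universe u

/-- An inverse monoid with zero: every element `a` has a unique generalized
inverse `a⁻¹`, and `0` is an absorbing element. -/
class InverseMonoidWithZero (S : Type u) extends Monoid S, Zero S, Inv S where
  zero_mul' : ∀ a : S, 0 * a = 0
  mul_zero' : ∀ a : S, a * 0 = 0
  mul_inv_mul : ∀ a : S, a * a⁻¹ * a = a
  inv_mul_inv : ∀ a : S, a⁻¹ * a * a⁻¹ = a⁻¹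
  inv_unique : ∀ a b : S, a * b * a = a → b * a * b = b → b = a⁻¹

section BasicDefs

variable {S : Type u}

/-- The natural partial order: `a ≤ b` iff `a = e * b` for some idempotent `e`. -/
def nle [InverseMonoidWithZero S] (a b : S) : Prop :=
  ∃ e : S, e * e = e ∧ a = e * b

/-- `a` and `b` are compatible if `a * b⁻¹` and `a⁻¹ * b` are idempotents. -/
def Compat [InverseMonoidWithZero S] (a b : S) : Prop :=
  (a * b⁻¹) * (a * b⁻¹) = a * b⁻¹ ∧ (a⁻¹ * b) * (a⁻¹ * b) = a⁻¹ * b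

/-- `a` and `b` are orthogonal if `a * b⁻¹ = 0` and `a⁻¹ * b = 0`. -/
def Orth [InverseMonoidWithZero S] (a b : S) : Prop :=
  a * b⁻¹ = 0 ∧ a⁻¹ * b = 0

end BasicDefs

/-- A distributive inverse monoid: every compatible pair has a join (for the
natural partial order), recorded by `sup`, and multiplication distributes over
these binary joins. -/
class DistributiveInverseMonoid (S : Type u) extends InverseMonoidWithZero S where
  sup : S → S → S
  le_sup_left : ∀ a b : S, Compat a b → nle a (sup a b)
  le_sup_right : ∀ a b : S, Compat a b → nle b (sup a b)
  sup_le : ∀ a b c : S, Compat a b → nle a c → nle b c → nle (sup a b) c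
  mul_sup : ∀ a b c : S, Compat a b → c * sup a b = sup (c * a) (c * b)
  sup_mul : ∀ a b c : S, Compat a b → sup a b * c = sup (a * c) (b * c)

/-- A Boolean inverse monoid: a distributive inverse monoid whose idempotents
form a Boolean algebra under the natural partial order; `compl` records the
complementation on idempotents. -/
class BooleanInverseMonoid (S : Type u) extends DistributiveInverseMonoid S where
  compl : S → S
  compl_idem : ∀ e : S, e * e = e → compl e * compl e = compl e
  mul_compl : ∀ e : S, e * e = e → e * compl e = 0
  sup_compl : ∀ e : S, e * e = e → sup e (compl e) = 1

/-- A Boolean inverse ∧-monoid: a Boolean inverse monoid in which every pair of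
elements has a meet with respect to the natural partial order. -/
class BooleanInverseMeetMonoid (S : Type u) extends BooleanInverseMonoid S where
  inf : S → S → S
  inf_le_left : ∀ a b : S, nle (inf a b) a
  inf_le_right : ∀ a b : S, nle (inf a b) b
  le_inf : ∀ a b c : S, nle c a → nle c b → nle c (inf a b)

section MoreDefs

variable {S : Type u}

/-- The join of a compatible pair. -/
def bsup [DistributiveInverseMonoid S] (a b : S) : S := DistributiveInverseMonoid.sup a b

/-- Complementation in the Boolean algebra of idempotents. -/
def bcompl [BooleanInverseMonoid S] (e : S) : S := BooleanInverseMonoid.compl e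

/-- The binary meet. -/
def binf [BooleanInverseMeetMonoid S] (a b : S) : S := BooleanInverseMeetMonoid.inf a b

/-- The fixed-point operator `φ(s) = s ∧ 1`. -/
def phi [BooleanInverseMeetMonoid S] (s : S) : S := binf s 1

/-- The support operator `σ(s) = \overline{φ(s)} ⋅ s⁻¹ s`. -/
def sigma [BooleanInverseMeetMonoid S] (s : S) : S := bcompl (phi s) * (s⁻¹ * s)

/-- An infinitesimal is a non-zero element that squares to zero. -/
def Infinitesimal [InverseMonoidWithZero S] (a : S) : Prop := a ≠ 0 ∧ a * a = 0

/-- A (two-sided) ideal. -/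
def IsMIdeal [InverseMonoidWithZero S] (I : Set S) : Prop :=
  I.Nonempty ∧ ∀ a ∈ I, ∀ s : S, s * a ∈ I ∧ a * s ∈ I

/-- A ∨-ideal: an ideal closed under joins of compatible pairs. -/
def IsVIdeal [DistributiveInverseMonoid S] (I : Set S) : Prop :=
  IsMIdeal I ∧ ∀ a ∈ I, ∀ b ∈ I, Compat a b → bsup a b ∈ I

end MoreDefs

/-- 0-simplifying: the only ∨-ideals are `{0}` and `S`. -/
def ZeroSimplifying (S : Type u) [DistributiveInverseMonoid S] : Prop :=
  ∀ I : Set S, IsVIdeal I → I = {0} ∨ I = Set.univ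

/-- 0-simple: non-trivial and the only ideals are `{0}` and `S`. -/
def ZeroSimple (S : Type u) [InverseMonoidWithZero S] : Prop :=
  (∃ s : S, s ≠ 0) ∧ ∀ I : Set S, IsMIdeal I → I = {0} ∨ I = Set.univ

/-- Fundamental: every element commuting with all idempotents is an idempotent. -/
def Fundamental (S : Type u) [InverseMonoidWithZero S] : Prop :=
  ∀ a : S, (∀ e : S, e * e = e → a * e = e * a) → a * a = a

/-- The Boolean algebra of idempotents is atomless. -/
def IdemAtomless (S : Type u) [InverseMonoidWithZero S] : Prop :=
  ∀ e : S, e * e = e → e ≠ 0 → ∃ f : S, f * f = f ∧ f ≠ 0 ∧ nle f e ∧ f ≠ e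

section Filters

variable {S : Type u}

/-- A filter in a Boolean inverse ∧-monoid: a nonempty subset closed under
binary meets and upward closed in the natural partial order. -/
def IsMFilter [BooleanInverseMeetMonoid S] (A : Set S) : Prop :=
  A.Nonempty ∧ (∀ a ∈ A, ∀ b ∈ A, binf a b ∈ A) ∧ ∀ a ∈ A, ∀ b : S, nle a b → b ∈ A

/-- An ultrafilter: a maximal proper filter. -/
def IsMUltrafilter [BooleanInverseMeetMonoid S] (A : Set S) : Prop :=
  IsMFilter A ∧ (0 : S) ∉ A ∧ ∀ B : Set S, IsMFilter B → (0 : S) ∉ B → A ⊆ B → A = B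

/-- A filter of the Boolean algebra of idempotents (meet of idempotents is
their product). -/
def IsIdemFilter [InverseMonoidWithZero S] (F : Set S) : Prop :=
  F.Nonempty ∧ (∀ e ∈ F, e * e = e) ∧ (∀ e ∈ F, ∀ f ∈ F, e * f ∈ F) ∧
    ∀ e ∈ F, ∀ f : S, f * f = f → nle e f → f ∈ F

/-- An ultrafilter of the Boolean algebra of idempotents. -/
def IsIdemUltrafilter [InverseMonoidWithZero S] (F : Set S) : Prop :=
  IsIdemFilter F ∧ (0 : S) ∉ F ∧
    ∀ G : Set S, IsIdemFilter G → (0 : S) ∉ G → F ⊆ G → F = G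

end Filters

section PencilDefs

variable {S : Type u}

/-- `Preceq e f`: there is a pencil from `e` to `f`, i.e. finitely many
elements `x₁, …, xₘ` with `r(xᵢ) ≤ f` for all `i` and `e = ⋁ d(xᵢ)`
(a least upper bound for the natural partial order). -/
def Preceq [DistributiveInverseMonoid S] (e f : S) : Prop :=
  ∃ l : List S, l ≠ [] ∧ (∀ x ∈ l, nle (x * x⁻¹) f) ∧
    (∀ x ∈ l, nle (x⁻¹ * x) e) ∧ ∀ c : S, (∀ x ∈ l, nle (x⁻¹ * x) c) → nle e c

/-- Piecewise factorizable: every element is a finite join of elements each of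
which lies beneath a unit. -/
def PiecewiseFactorizable (S : Type u) [DistributiveInverseMonoid S] : Prop :=
  ∀ s : S, ∃ l : List S, l ≠ [] ∧ (∀ x ∈ l, ∃ g : S, IsUnit g ∧ nle x g) ∧
    (∀ x ∈ l, nle x s) ∧ ∀ c : S, (∀ x ∈ l, nle x c) → nle s c

/-- A properly infinite idempotent. -/
def ProperlyInfinite [DistributiveInverseMonoid S] (e : S) : Prop :=
  ∃ x y : S, x⁻¹ * x = e ∧ y⁻¹ * y = e ∧ Orth (x * x⁻¹) (y * y⁻¹) ∧
    nle (bsup (x * x⁻¹) (y * y⁻¹)) e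

end PencilDefs

/-- Purely infinite: every non-zero idempotent is properly infinite. -/
def PurelyInfinite (S : Type u) [DistributiveInverseMonoid S] : Prop :=
  ∀ e : S, e * e = e → e ≠ 0 → ProperlyInfinite e

/-!
If the idempotents are not atomless, pick an atom `e`. The elements whose domain is covered by
finitely many domains of elements with range under `e` form a ∨-ideal containing `e`; as `S` is
0-simplifying it contains `1`, so `1` is a finite join of atoms `d₁, …, dₙ`, all `𝒟`-related
to `e`. Conjugation `dᵢ ↦ s⁻¹ dᵢ s` lets each `s` act as a partial bijection of `{1, …, n}`.
This is multiplicative; injective, because in a fundamental monoid the only element with domain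
and range an atom `e` is `e` itself; and surjective, because a partial bijection is realised by
the join of the corresponding pairwise orthogonal arrows `dⱼ → dᵢ`.
-/

namespace InverseMonoidWithZero

variable {S : Type u} [InverseMonoidWithZero S]

scoped instance : MonoidWithZero S where
  zero_mul := zero_mul'
  mul_zero := mul_zero'

scoped instance : InvolutiveInv S where
  inv_inv a := (inv_unique a⁻¹ a (inv_mul_inv a) (mul_inv_mul a)).symm

@[simp] theorem mul_inv_mul_assoc (a : S) : a * (a⁻¹ * a) = a := by
  rw [← mul_assoc, mul_inv_mul]

@[simp] theorem inv_mul_inv_assoc (a : S) : a⁻¹ * (a * a⁻¹) = a⁻¹ := by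
  rw [← mul_assoc, inv_mul_inv]

@[simp] theorem mul_inv_mul_cancel_left (a b : S) : a * (a⁻¹ * (a * b)) = a * b := by
  rw [← mul_assoc, ← mul_assoc, mul_inv_mul]

@[simp] theorem inv_mul_inv_cancel_left (a b : S) : a⁻¹ * (a * (a⁻¹ * b)) = a⁻¹ * b := by
  rw [← mul_assoc, ← mul_assoc, inv_mul_inv]

theorem _root_.IsIdempotentElem.inv_eq_self {e : S} (he : IsIdempotentElem e) : e⁻¹ = e :=
  (inv_unique e e (by rw [he.eq, he.eq]) (by rw [he.eq, he.eq])).symm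

@[simp] theorem inv_zero : (0 : S)⁻¹ = 0 := IsIdempotentElem.zero.inv_eq_self

@[simp] theorem inv_one : (1 : S)⁻¹ = 1 := IsIdempotentElem.one.inv_eq_self

theorem isIdempotentElem_mul_inv (a : S) : IsIdempotentElem (a * a⁻¹) := by
  rw [IsIdempotentElem, mul_assoc, inv_mul_inv_assoc]

theorem isIdempotentElem_inv_mul (a : S) : IsIdempotentElem (a⁻¹ * a) := by
  simpa using isIdempotentElem_mul_inv a⁻¹

theorem isIdempotentElem_mul {e f : S} (he : IsIdempotentElem e) (hf : IsIdempotentElem f) :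
    IsIdempotentElem (e * f) := by
  -- `f (e f)⁻¹ e` is another inverse of `e f`, which makes `(e f)⁻¹` idempotent.
  have hx : f * (e * f)⁻¹ * e = (e * f)⁻¹ := by
    refine inv_unique _ _ ?_ ?_
    · calc e * f * (f * (e * f)⁻¹ * e) * (e * f)
            = e * (f * f) * (e * f)⁻¹ * ((e * e) * f) := by simp only [mul_assoc]
        _ = e * f := by rw [hf.eq, he.eq, mul_inv_mul]
    · calc f * (e * f)⁻¹ * e * (e * f) * (f * (e * f)⁻¹ * e)
            = f * ((e * f)⁻¹ * ((e * e) * (f * f)) * (e * f)⁻¹) * e := by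
              simp only [mul_assoc]
        _ = f * (e * f)⁻¹ * e := by rw [he.eq, hf.eq, inv_mul_inv]
  have hinv : IsIdempotentElem (e * f)⁻¹ :=
    calc (e * f)⁻¹ * (e * f)⁻¹ = (f * (e * f)⁻¹ * e) * (f * (e * f)⁻¹ * e) := by rw [hx]
      _ = f * ((e * f)⁻¹ * (e * f) * (e * f)⁻¹) * e := by simp only [mul_assoc]
      _ = (e * f)⁻¹ := by rw [inv_mul_inv, hx]
  have h := hinv.inv_eq_self
  rw [inv_inv] at h
  rwa [h]

theorem _root_.IsIdempotentElem.commute {e f : S} (he : IsIdempotentElem e)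
    (hf : IsIdempotentElem f) : Commute e f := by
  have hef := isIdempotentElem_mul he hf
  have hfe := isIdempotentElem_mul hf he
  have hinv : f * e = (e * f)⁻¹ := by
    refine inv_unique _ _ ?_ ?_
    · calc e * f * (f * e) * (e * f) = e * f * (e * f) := by
            simp only [mul_assoc, hf.mul_self_mul, he.mul_self_mul]
        _ = e * f := hef.eq
    · calc f * e * (e * f) * (f * e) = f * e * (f * e) := by
            simp only [mul_assoc, hf.mul_self_mul, he.mul_self_mul]
        _ = f * e := hfe.eq
  show e * f = f * e
  rw [hinv, hef.inv_eq_self]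

@[simp] theorem mul_inv_rev (a b : S) : (a * b)⁻¹ = b⁻¹ * a⁻¹ := by
  have hcomm : b * b⁻¹ * (a⁻¹ * a) = a⁻¹ * a * (b * b⁻¹) :=
    ((isIdempotentElem_mul_inv b).commute (isIdempotentElem_inv_mul a)).eq
  refine (inv_unique _ _ ?_ ?_).symm
  · calc a * b * (b⁻¹ * a⁻¹) * (a * b) = a * (b * b⁻¹ * (a⁻¹ * a)) * b := by
          simp only [mul_assoc]
      _ = a * b := by rw [hcomm]; simp [mul_assoc]
  · calc b⁻¹ * a⁻¹ * (a * b) * (b⁻¹ * a⁻¹)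
          = b⁻¹ * (a⁻¹ * a * (b * b⁻¹)) * a⁻¹ := by simp only [mul_assoc]
      _ = b⁻¹ * a⁻¹ := by rw [← hcomm]; simp [mul_assoc]

theorem _root_.IsIdempotentElem.inv {e : S} (he : IsIdempotentElem e) :
    IsIdempotentElem e⁻¹ := by
  rwa [he.inv_eq_self]

theorem _root_.IsIdempotentElem.conj {e : S} (he : IsIdempotentElem e) (s : S) :
    IsIdempotentElem (s⁻¹ * e * s) :=
  calc s⁻¹ * e * s * (s⁻¹ * e * s) = s⁻¹ * (e * (s * s⁻¹)) * e * s := by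
        simp only [mul_assoc]
    _ = s⁻¹ * (s * s⁻¹ * e) * e * s := by rw [(he.commute (isIdempotentElem_mul_inv s)).eq]
    _ = s⁻¹ * e * s := by simp only [mul_assoc, inv_mul_inv_cancel_left, he.mul_self_mul]

theorem _root_.IsIdempotentElem.conj_eq_inv_mul {e : S} (he : IsIdempotentElem e) (s : S) :
    s⁻¹ * e * s = (e * s)⁻¹ * (e * s) := by
  simp only [mul_inv_rev, he.inv_eq_self, mul_assoc, he.mul_self_mul]

theorem _root_.IsIdempotentElem.mul_mul_inv_eq {e : S} (he : IsIdempotentElem e) (x : S) :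
    e * x * (e * x)⁻¹ = e * (x * x⁻¹) := by
  calc e * x * (e * x)⁻¹ = e * (x * x⁻¹) * e := by simp [mul_assoc, he.inv_eq_self]
    _ = e * (x * x⁻¹) := by
      rw [mul_assoc, ← (he.commute (isIdempotentElem_mul_inv x)).eq, he.mul_self_mul]

theorem _root_.IsIdempotentElem.mul_eq_mul_conj {e : S} (he : IsIdempotentElem e) (s : S) :
    e * s = s * (s⁻¹ * e * s) :=
  calc e * s = e * (s * s⁻¹) * s := by simp [mul_assoc]
    _ = s * (s⁻¹ * e * s) := by
      rw [← (isIdempotentElem_mul_inv s).commute he |>.eq]; simp only [mul_assoc]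

theorem _root_.IsIdempotentElem.nle_iff {e f : S} (he : IsIdempotentElem e)
    (hf : IsIdempotentElem f) : nle f e ↔ f * e = f := by
  refine ⟨?_, fun h => ⟨f, hf, h.symm⟩⟩
  rintro ⟨g, -, rfl⟩
  rw [mul_assoc, he.eq]

theorem _root_.nle.refl (a : S) : nle a a :=
  ⟨a * a⁻¹, isIdempotentElem_mul_inv a, (mul_inv_mul a).symm⟩

theorem zero_nle (a : S) : nle 0 a := ⟨0, IsIdempotentElem.zero, (zero_mul a).symm⟩

theorem _root_.nle.trans {a b c : S} (hab : nle a b) (hbc : nle b c) : nle a c := by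
  obtain ⟨e, he, rfl⟩ := hab
  obtain ⟨f, hf, rfl⟩ := hbc
  exact ⟨e * f, isIdempotentElem_mul he hf, by rw [mul_assoc]⟩

theorem _root_.nle.antisymm {a b : S} (hab : nle a b) (hba : nle b a) : a = b := by
  obtain ⟨e, he : IsIdempotentElem e, rfl⟩ := hab
  obtain ⟨f, hf : IsIdempotentElem f, hb⟩ := hba
  calc e * b = e * (f * (e * b)) := by rw [← hb]
    _ = f * (e * (e * b)) := by rw [← mul_assoc, (he.commute hf).eq, mul_assoc]
    _ = b := by rw [he.mul_self_mul, ← hb]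

theorem _root_.nle.mul_right {a b : S} (h : nle a b) (c : S) : nle (a * c) (b * c) := by
  obtain ⟨e, he, rfl⟩ := h
  exact ⟨e, he, mul_assoc e b c⟩

theorem _root_.nle.mul_left {a b : S} (h : nle a b) (c : S) : nle (c * a) (c * b) := by
  obtain ⟨e, he : IsIdempotentElem e, rfl⟩ := h
  refine ⟨c * e * c⁻¹, by simpa using (he.conj c⁻¹).eq, ?_⟩
  calc c * (e * b) = c * (c⁻¹ * c * e) * b := by simp [mul_assoc]
    _ = c * e * c⁻¹ * (c * b) := by
      rw [← (he.commute (isIdempotentElem_inv_mul c)).eq]; simp only [mul_assoc]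

theorem _root_.nle.inv {a b : S} (h : nle a b) : nle a⁻¹ b⁻¹ := by
  obtain ⟨e, he : IsIdempotentElem e, rfl⟩ := h
  refine ⟨b⁻¹ * e * b, he.conj b, ?_⟩
  calc (e * b)⁻¹ = b⁻¹ * (b * b⁻¹ * e) := by simp [he.inv_eq_self, mul_assoc]
    _ = b⁻¹ * e * b * b⁻¹ := by
      rw [← (he.commute (isIdempotentElem_mul_inv b)).eq]; simp only [mul_assoc]

theorem nle_inv_iff {a b : S} : nle a⁻¹ b⁻¹ ↔ nle a b :=
  ⟨fun h => by simpa using h.inv, nle.inv⟩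

theorem nle_one_iff {a : S} : nle a 1 ↔ IsIdempotentElem a := by
  refine ⟨?_, fun ha => ⟨a, ha, (mul_one a).symm⟩⟩
  rintro ⟨e, he, rfl⟩
  rwa [mul_one]

theorem inv_mul_nle_of_mul_eq {x f : S} (hf : IsIdempotentElem f) (h : x * f = x) :
    nle (x⁻¹ * x) f :=
  (hf.nle_iff (isIdempotentElem_inv_mul x)).2 (by rw [mul_assoc, h])

theorem mul_eq_of_inv_mul_nle {x f : S} (hf : IsIdempotentElem f) (h : nle (x⁻¹ * x) f) :
    x * f = x := by
  rw [hf.nle_iff (isIdempotentElem_inv_mul x)] at h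
  calc x * f = x * (x⁻¹ * x * f) := by simp [mul_assoc]
    _ = x := by rw [h, mul_inv_mul_assoc]

theorem eq_zero_of_inv_mul_eq_zero {x : S} (h : x⁻¹ * x = 0) : x = 0 := by
  rw [← mul_inv_mul_assoc x, h, mul_zero]

theorem _root_.Compat.refl (a : S) : Compat a a :=
  ⟨isIdempotentElem_mul_inv a, isIdempotentElem_inv_mul a⟩

theorem _root_.Compat.symm {a b : S} (h : Compat a b) : Compat b a := by
  have h₁ := IsIdempotentElem.inv h.1
  have h₂ := IsIdempotentElem.inv h.2
  simp only [mul_inv_rev, inv_inv] at h₁ h₂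
  exact ⟨h₁, h₂⟩

theorem _root_.Compat.inv {a b : S} (h : Compat a b) : Compat a⁻¹ b⁻¹ :=
  ⟨by simpa using h.2, by simpa using h.1⟩

theorem compat_of_isIdempotentElem {e f : S} (he : IsIdempotentElem e)
    (hf : IsIdempotentElem f) : Compat e f :=
  ⟨by rw [hf.inv_eq_self]; exact isIdempotentElem_mul he hf,
    by rw [he.inv_eq_self]; exact isIdempotentElem_mul he hf⟩

theorem compat_zero_right (a : S) : Compat a 0 := ⟨by simp, by simp⟩

theorem compat_zero_left (a : S) : Compat 0 a := (compat_zero_right a).symm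

theorem _root_.Orth.compat {a b : S} (h : Orth a b) : Compat a b :=
  ⟨by rw [h.1, mul_zero], by rw [h.2, mul_zero]⟩

theorem _root_.Compat.mul_left {a b : S} (h : Compat a b) (c : S) : Compat (c * a) (c * b) := by
  constructor
  · change IsIdempotentElem (c * a * (c * b)⁻¹)
    simpa [mul_assoc] using IsIdempotentElem.conj h.1 c⁻¹
  · change IsIdempotentElem ((c * a)⁻¹ * (c * b))
    have : (c * a)⁻¹ * (c * b) = a⁻¹ * b * (b⁻¹ * (c⁻¹ * c) * b) := by
      rw [mul_inv_rev, mul_assoc a⁻¹ b, ← (isIdempotentElem_inv_mul c).mul_eq_mul_conj b]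
      simp only [mul_assoc]
    rw [this]
    exact isIdempotentElem_mul h.2 ((isIdempotentElem_inv_mul c).conj b)

theorem _root_.Compat.mul_right {a b : S} (h : Compat a b) (c : S) : Compat (a * c) (b * c) := by
  simpa using (h.inv.mul_left c⁻¹).inv

theorem orth_of_mul_eq_zero {x y : S} (hr : x * x⁻¹ * (y * y⁻¹) = 0)
    (hd : x⁻¹ * x * (y⁻¹ * y) = 0) : Orth x y := by
  constructor
  · calc x * y⁻¹ = x * (x⁻¹ * x * (y⁻¹ * y)) * y⁻¹ := by simp [mul_assoc]
      _ = 0 := by rw [hd]; simp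
  · calc x⁻¹ * y = x⁻¹ * (x * x⁻¹ * (y * y⁻¹)) * y := by simp [mul_assoc]
      _ = 0 := by rw [hr]; simp

theorem exists_arrow_of_mul_inv_eq {x y : S} (h : x * x⁻¹ = y * y⁻¹) :
    ∃ w : S, w⁻¹ * w = y⁻¹ * y ∧ w * w⁻¹ = x⁻¹ * x := by
  refine ⟨x⁻¹ * y, ?_, ?_⟩
  · calc (x⁻¹ * y)⁻¹ * (x⁻¹ * y) = y⁻¹ * (x * x⁻¹) * y := by simp [mul_assoc]
      _ = y⁻¹ * y := by rw [h]; simp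
  · calc x⁻¹ * y * (x⁻¹ * y)⁻¹ = x⁻¹ * (y * y⁻¹) * x := by simp [mul_assoc]
      _ = x⁻¹ * x := by rw [← h]; simp

structure IsIdemAtom (e : S) : Prop where
  isIdempotentElem : IsIdempotentElem e
  ne_zero : e ≠ 0
  eq_zero_or_eq : ∀ f : S, IsIdempotentElem f → nle f e → f = 0 ∨ f = e

theorem exists_isIdemAtom_of_not_idemAtomless (h : ¬IdemAtomless S) : ∃ e : S, IsIdemAtom e := by
  simp only [IdemAtomless, not_forall, not_exists, not_and, not_not] at h
  obtain ⟨e, he, he0, hmin⟩ := h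
  exact ⟨e, he, he0, fun f hf hfe => or_iff_not_imp_left.2 fun hf0 => hmin f hf hf0 hfe⟩

namespace IsIdemAtom

variable {e f : S}

theorem mul_eq_zero_or_eq (he : IsIdemAtom e) (hf : IsIdempotentElem f) :
    e * f = 0 ∨ e * f = e :=
  he.eq_zero_or_eq _ (isIdempotentElem_mul he.1 hf) <|
    (he.1.nle_iff (isIdempotentElem_mul he.1 hf)).2 <| by
      rw [mul_assoc, ← (he.1.commute hf).eq, he.1.mul_self_mul]

theorem eq_of_mul_ne_zero (he : IsIdemAtom e) (hf : IsIdemAtom f) (h : e * f ≠ 0) : e = f := by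
  have hcomm := (he.1.commute hf.1).eq
  have hef : e * f = e := (he.mul_eq_zero_or_eq hf.1).resolve_left h
  have hfe : f * e = f := (hf.mul_eq_zero_or_eq he.1).resolve_left (hcomm ▸ h)
  rw [← hef, hcomm, hfe]

theorem mul_mul_inv (he : IsIdemAtom e) {x : S} (h : e * x ≠ 0) : e * x * (e * x)⁻¹ = e := by
  rw [he.1.mul_mul_inv_eq]
  refine (he.mul_eq_zero_or_eq (isIdempotentElem_mul_inv x)).resolve_left fun h0 => h ?_
  calc e * x = e * (x * x⁻¹) * x := by simp [mul_assoc]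
    _ = 0 := by rw [h0, zero_mul]

theorem inv_mul {x : S} (h : IsIdemAtom (x * x⁻¹)) : IsIdemAtom (x⁻¹ * x) := by
  refine ⟨isIdempotentElem_inv_mul x, fun h0 => h.ne_zero ?_, fun f hf hfx => ?_⟩
  · simp [eq_zero_of_inv_mul_eq_zero h0]
  -- transport `f` along `x` to an idempotent under the atom `x x⁻¹`
  have hd := isIdempotentElem_inv_mul x
  have hfd : f * (x⁻¹ * x) = f := (hd.nle_iff hf).1 hfx
  have hback : x⁻¹ * (x * f * x⁻¹) * x = f :=
    calc x⁻¹ * (x * f * x⁻¹) * x = x⁻¹ * x * f * (x⁻¹ * x) := by simp only [mul_assoc]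
      _ = f := by rw [← (hf.commute hd).eq, hfd, hfd]
  have hidem : IsIdempotentElem (x * f * x⁻¹) := by simpa using hf.conj x⁻¹
  have hle : nle (x * f * x⁻¹) (x * x⁻¹) :=
    ((isIdempotentElem_mul_inv x).nle_iff hidem).2 (by simp [mul_assoc])
  rcases h.eq_zero_or_eq _ hidem hle with h0 | h1
  · left
    rw [← hback, h0]
    simp
  · right
    rw [← hback, h1]
    simp

theorem conj (he : IsIdemAtom e) (s : S) : s⁻¹ * e * s = 0 ∨ IsIdemAtom (s⁻¹ * e * s) := by
  rw [he.1.conj_eq_inv_mul]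
  by_cases h : e * s = 0
  · simp [h]
  · right
    apply inv_mul
    rwa [he.mul_mul_inv h]

theorem conj_conj (he : IsIdemAtom e) {s : S} (h : s⁻¹ * e * s ≠ 0) :
    s * (s⁻¹ * e * s) * s⁻¹ = e := by
  have hs : e * s ≠ 0 := fun hs => h (by rw [mul_assoc, hs, mul_zero])
  rw [← he.1.mul_eq_mul_conj, mul_assoc, ← he.1.mul_mul_inv_eq, he.mul_mul_inv hs]

theorem conj_eq_iff (he : IsIdemAtom e) (hf : IsIdemAtom f) (s : S) :
    s⁻¹ * e * s = f ↔ s * f * s⁻¹ = e := by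
  constructor
  · rintro rfl
    exact he.conj_conj hf.ne_zero
  · rintro rfl
    simpa using hf.conj_conj (s := s⁻¹) (by simpa using he.ne_zero)

end IsIdemAtom

theorem _root_.Fundamental.eq_of_loop (hS : Fundamental S) {e u : S} (he : IsIdemAtom e)
    (hd : u⁻¹ * u = e) (hr : u * u⁻¹ = e) : u = e := by
  have hue : u * e = u := by rw [← hd, mul_inv_mul_assoc]
  have heu : e * u = u := by rw [← hr, mul_inv_mul]
  have hcomm : ∀ f : S, f * f = f → u * f = f * u := by
    intro f hf
    calc u * f = u * (e * f) := by rw [← mul_assoc, hue]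
      _ = e * f * u := by
        rcases he.mul_eq_zero_or_eq hf with h | h <;> rw [h] <;> simp [hue, heu]
      _ = f * u := by rw [(he.1.commute hf).eq, mul_assoc, heu]
  have hu : IsIdempotentElem u := hS u hcomm
  rw [← hr, hu.inv_eq_self, hu.eq]

theorem _root_.Fundamental.eq_of_inv_mul_eq (hS : Fundamental S) {e x y : S} (he : IsIdemAtom e)
    (hx : x * x⁻¹ = e) (hy : y * y⁻¹ = e) (h : x⁻¹ * x = y⁻¹ * y) : x = y := by
  -- `x y⁻¹` is a loop at the atom `e`
  have hw : x * y⁻¹ = e := by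
    refine hS.eq_of_loop he ?_ ?_
    · calc (x * y⁻¹)⁻¹ * (x * y⁻¹) = y * (x⁻¹ * x) * y⁻¹ := by simp [mul_assoc]
        _ = e := by rw [h]; simp [hy]
    · calc x * y⁻¹ * (x * y⁻¹)⁻¹ = x * (y⁻¹ * y) * x⁻¹ := by simp [mul_assoc]
        _ = e := by rw [← h]; simp [hx]
  calc x = x * (y⁻¹ * y) := by rw [← h, mul_inv_mul_assoc]
    _ = e * y := by rw [← mul_assoc, hw]
    _ = y := by rw [← hy, mul_inv_mul]

theorem _root_.Fundamental.mul_eq_of_conj_eq (hS : Fundamental S) {e s t : S} (he : IsIdemAtom e)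
    (h : s⁻¹ * e * s = t⁻¹ * e * t) : e * s = e * t := by
  rw [he.1.conj_eq_inv_mul, he.1.conj_eq_inv_mul] at h
  by_cases hs : e * s = 0
  · rw [hs, eq_comm]
    exact eq_zero_of_inv_mul_eq_zero (by rw [← h, hs, mul_zero])
  · have ht : e * t ≠ 0 := fun ht => hs (eq_zero_of_inv_mul_eq_zero (by rw [h, ht, mul_zero]))
    exact hS.eq_of_inv_mul_eq he (he.mul_mul_inv hs) (he.mul_mul_inv ht) h

end InverseMonoidWithZero

namespace DistributiveInverseMonoid

open InverseMonoidWithZero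

variable {S : Type u} [DistributiveInverseMonoid S]

theorem sup_zero (a : S) : sup a 0 = a :=
  (sup_le a 0 a (compat_zero_right a) (nle.refl a) (zero_nle a)).antisymm
    (le_sup_left a 0 (compat_zero_right a))

theorem zero_sup (a : S) : sup 0 a = a :=
  (sup_le 0 a a (compat_zero_left a) (zero_nle a) (nle.refl a)).antisymm
    (le_sup_right 0 a (compat_zero_left a))

theorem inv_sup {a b : S} (h : Compat a b) : (sup a b)⁻¹ = sup a⁻¹ b⁻¹ := by
  refine nle.antisymm ?_ (sup_le _ _ _ h.inv (le_sup_left a b h).inv (le_sup_right a b h).inv)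
  rw [← nle_inv_iff, inv_inv]
  exact sup_le _ _ _ h (by simpa using (le_sup_left _ _ h.inv).inv)
    (by simpa using (le_sup_right _ _ h.inv).inv)

theorem isIdempotentElem_sup {e f : S} (he : IsIdempotentElem e) (hf : IsIdempotentElem f) :
    IsIdempotentElem (sup e f) :=
  nle_one_iff.1 <|
    sup_le _ _ _ (compat_of_isIdempotentElem he hf) (nle_one_iff.2 he) (nle_one_iff.2 hf)

theorem compat_sup {a b c : S} (hab : Compat a b) (hac : Compat a c) (hbc : Compat b c) :
    Compat a (sup b c) := by
  constructor
  · change IsIdempotentElem (a * (sup b c)⁻¹)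
    rw [inv_sup hbc, mul_sup _ _ _ hbc.inv]
    exact isIdempotentElem_sup hab.1 hac.1
  · change IsIdempotentElem (a⁻¹ * sup b c)
    rw [mul_sup _ _ _ hbc]
    exact isIdempotentElem_sup hab.2 hac.2

theorem inv_mul_sup_nle {a b : S} (h : Compat a b) :
    nle ((sup a b)⁻¹ * sup a b) (sup (a⁻¹ * a) (b⁻¹ * b)) := by
  have hf := isIdempotentElem_sup (isIdempotentElem_inv_mul a) (isIdempotentElem_inv_mul b)
  have hd := compat_of_isIdempotentElem (isIdempotentElem_inv_mul a) (isIdempotentElem_inv_mul b)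
  refine inv_mul_nle_of_mul_eq hf ?_
  rw [sup_mul _ _ _ h, mul_eq_of_inv_mul_nle hf (le_sup_left _ _ hd),
    mul_eq_of_inv_mul_nle hf (le_sup_right _ _ hd)]

def listSup : List S → S
  | [] => 0
  | a :: l => sup a (listSup l)

@[simp] theorem listSup_nil : listSup ([] : List S) = 0 := rfl

@[simp] theorem listSup_cons (a : S) (l : List S) : listSup (a :: l) = sup a (listSup l) := rfl

theorem compat_listSup {a : S} {l : List S} (hl : l.Pairwise Compat)
    (ha : ∀ b ∈ l, Compat a b) : Compat a (listSup l) := by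
  induction l generalizing a with
  | nil => exact compat_zero_right a
  | cons b l ih =>
    rw [List.pairwise_cons] at hl
    simp only [List.mem_cons, forall_eq_or_imp] at ha
    exact compat_sup ha.1 (ih hl.2 ha.2) (ih hl.2 hl.1)

theorem le_listSup {a : S} {l : List S} (hl : l.Pairwise Compat) (ha : a ∈ l) :
    nle a (listSup l) := by
  induction l with
  | nil => simp at ha
  | cons b l ih =>
    rw [List.pairwise_cons] at hl
    have hc := compat_listSup hl.2 hl.1
    rcases List.mem_cons.1 ha with rfl | ha
    · exact le_sup_left _ _ hc
    · exact (ih hl.2 ha).trans (le_sup_right _ _ hc)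

theorem listSup_le {c : S} {l : List S} (hl : l.Pairwise Compat) (h : ∀ a ∈ l, nle a c) :
    nle (listSup l) c := by
  induction l with
  | nil => exact zero_nle c
  | cons b l ih =>
    rw [List.pairwise_cons] at hl
    simp only [List.mem_cons, forall_eq_or_imp] at h
    exact sup_le _ _ _ (compat_listSup hl.2 hl.1) h.1 (ih hl.2 h.2)

theorem mul_listSup {l : List S} (hl : l.Pairwise Compat) (c : S) :
    c * listSup l = listSup (l.map (c * ·)) := by
  induction l with
  | nil => exact mul_zero c
  | cons b l ih =>
    rw [List.pairwise_cons] at hl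
    rw [listSup_cons, mul_sup _ _ _ (compat_listSup hl.2 hl.1), ih hl.2, List.map_cons,
      listSup_cons]

theorem listSup_mul {l : List S} (hl : l.Pairwise Compat) (c : S) :
    listSup l * c = listSup (l.map (· * c)) := by
  induction l with
  | nil => exact zero_mul c
  | cons b l ih =>
    rw [List.pairwise_cons] at hl
    rw [listSup_cons, sup_mul _ _ _ (compat_listSup hl.2 hl.1), ih hl.2, List.map_cons,
      listSup_cons]

theorem listSup_eq_zero {l : List S} (h : ∀ a ∈ l, a = 0) : listSup l = 0 := by
  induction l with
  | nil => rfl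
  | cons b l ih =>
    simp only [List.mem_cons, forall_eq_or_imp] at h
    rw [listSup_cons, h.1, ih h.2, sup_zero]

theorem listSup_mono {l l' : List S} (hl : l.Pairwise Compat) (hl' : l'.Pairwise Compat)
    (h : ∀ a ∈ l, a = 0 ∨ a ∈ l') : nle (listSup l) (listSup l') :=
  listSup_le hl fun a ha => (h a ha).elim (fun h0 => h0 ▸ zero_nle _) (le_listSup hl')

theorem pairwise_compat_of_isIdempotentElem {l : List S} (h : ∀ e ∈ l, IsIdempotentElem e) :
    l.Pairwise Compat :=
  List.pairwise_of_forall_mem_list fun e he f hf =>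
    compat_of_isIdempotentElem (h e he) (h f hf)

theorem listSup_ofFn_eq_apply {n : ℕ} (f : Fin n → S) (i : Fin n) (h : ∀ j ≠ i, f j = 0) :
    listSup (List.ofFn f) = f i := by
  induction n with
  | zero => exact i.elim0
  | succ n ih =>
    rw [List.ofFn_succ, listSup_cons]
    rcases Fin.eq_zero_or_eq_succ i with rfl | ⟨i, rfl⟩
    · rw [listSup_eq_zero (List.forall_mem_ofFn_iff.2 fun j => h _ (Fin.succ_ne_zero j)),
        sup_zero]
    · rw [h 0 (Fin.succ_ne_zero i).symm, zero_sup,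
        ih (fun j => f j.succ) i fun j hj => h _ (Fin.succ_injective _ |>.ne hj)]

theorem mul_listSup_ofFn {n : ℕ} {f : Fin n → S} (hf : ∀ i j, Compat (f i) (f j)) (c : S) :
    c * listSup (List.ofFn f) = listSup (List.ofFn fun i => c * f i) := by
  rw [mul_listSup (List.pairwise_ofFn.2 fun i j _ => hf i j), List.map_ofFn]
  rfl

theorem listSup_ofFn_mul {n : ℕ} {f : Fin n → S} (hf : ∀ i j, Compat (f i) (f j)) (c : S) :
    listSup (List.ofFn f) * c = listSup (List.ofFn fun i => f i * c) := by
  rw [listSup_mul (List.pairwise_ofFn.2 fun i j _ => hf i j), List.map_ofFn]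
  rfl

def domSup (l : List S) : S := listSup (l.map fun x => x⁻¹ * x)

theorem pairwise_compat_map_inv_mul (l : List S) : (l.map fun x => x⁻¹ * x).Pairwise Compat :=
  pairwise_compat_of_isIdempotentElem fun _ he =>
    let ⟨x, _, hx⟩ := List.mem_map.1 he
    hx ▸ isIdempotentElem_inv_mul x

theorem domSup_mono {l l' : List S} (h : l ⊆ l') : nle (domSup l) (domSup l') :=
  listSup_mono (pairwise_compat_map_inv_mul l) (pairwise_compat_map_inv_mul l')
    fun _ ha => Or.inr (List.map_subset _ h ha)

theorem conj_domSup (l : List S) (s : S) : s⁻¹ * domSup l * s = domSup (l.map (· * s)) := by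
  have hl := pairwise_compat_map_inv_mul l
  rw [domSup, mul_assoc, listSup_mul hl, mul_listSup (hl.map _ fun a b h => h.mul_right s),
    domSup, List.map_map, List.map_map, List.map_map]
  congr 1
  refine List.map_congr_left fun x _ => ?_
  simp [mul_assoc]

/-- `e * x` ranges over the elements with range under `e`. -/
def pencilIdeal (e : S) : Set S :=
  {s | ∃ l : List S, nle (s⁻¹ * s) (domSup (l.map (e * ·)))}

theorem mem_pencilIdeal_self {e : S} (he : IsIdempotentElem e) : e ∈ pencilIdeal e :=
  ⟨[1], by simpa [domSup, he.inv_eq_self, he.eq, sup_zero] using nle.refl e⟩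

theorem pencilIdeal_isVIdeal (e : S) : IsVIdeal (pencilIdeal e) := by
  refine ⟨⟨⟨0, [], by simpa [domSup] using zero_nle (0 : S)⟩,
    fun a ⟨l, ha⟩ s => ⟨?_, ?_⟩⟩, ?_⟩
  · have hdom := inv_mul_nle_of_mul_eq (isIdempotentElem_inv_mul a) (x := s * a)
      (by simp [mul_assoc])
    exact ⟨l, hdom.trans ha⟩
  · refine ⟨l.map (· * s), ?_⟩
    have hdom : (a * s)⁻¹ * (a * s) = s⁻¹ * (a⁻¹ * a) * s := by simp [mul_assoc]
    have hmap : (l.map (· * s)).map (e * ·) = (l.map (e * ·)).map (· * s) := by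
      simp [Function.comp_def, mul_assoc]
    rw [hdom, hmap, ← conj_domSup]
    exact (ha.mul_left s⁻¹).mul_right s
  · rintro a ⟨la, ha⟩ b ⟨lb, hb⟩ hab
    refine ⟨la ++ lb, (inv_mul_sup_nle hab).trans (sup_le _ _ _ ?_ ?_ ?_)⟩
    · exact compat_of_isIdempotentElem (isIdempotentElem_inv_mul a) (isIdempotentElem_inv_mul b)
    · exact ha.trans (domSup_mono (by simp))
    · exact hb.trans (domSup_mono (by simp))

theorem _root_.ZeroSimplifying.one_mem_pencilIdeal (h0 : ZeroSimplifying S) {e : S}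
    (he : IsIdempotentElem e) (hne : e ≠ 0) : (1 : S) ∈ pencilIdeal e := by
  rcases h0 _ (pencilIdeal_isVIdeal e) with h | h
  · have he0 := mem_pencilIdeal_self he
    rw [h] at he0
    exact absurd he0 hne
  · exact h ▸ Set.mem_univ 1

structure IsAtomPartition {n : ℕ} (d : Fin n → S) : Prop where
  isIdemAtom : ∀ i, IsIdemAtom (d i)
  injective : Function.Injective d
  listSup_eq_one : listSup (List.ofFn d) = 1

theorem exists_isAtomPartition {e : S} (he : IsIdemAtom e) {l : List S}
    (hl : nle 1 (domSup (l.map (e * ·)))) :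
    ∃ (n : ℕ) (d : Fin n → S), IsAtomPartition d ∧
      ∀ i j, ∃ u : S, u⁻¹ * u = d j ∧ u * u⁻¹ = d i := by
  classical
  set L := (l.map (e * ·)).map fun x => x⁻¹ * x
  have hL : ∀ z ∈ L, z = 0 ∨ ∃ u : S, u⁻¹ * u = z ∧ u * u⁻¹ = e := by
    simp only [L, List.map_map, List.mem_map, Function.comp_apply]
    rintro z ⟨x, -, rfl⟩
    by_cases hx : e * x = 0
    · simp [hx]
    · exact Or.inr ⟨e * x, rfl, he.mul_mul_inv hx⟩
  set D := (L.filter (· ≠ 0)).dedup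
  have hD : ∀ z ∈ D, ∃ u : S, u⁻¹ * u = z ∧ u * u⁻¹ = e := by
    intro z hz
    simp only [D, List.mem_dedup, List.mem_filter, decide_eq_true_eq] at hz
    exact (hL z hz.1).resolve_left hz.2
  have hDatom : ∀ z ∈ D, IsIdemAtom z := by
    intro z hz
    obtain ⟨u, rfl, hu⟩ := hD z hz
    exact IsIdemAtom.inv_mul (hu ▸ he)
  have hDcompat := pairwise_compat_of_isIdempotentElem fun z hz => (hDatom z hz).1
  refine ⟨D.length, D.get, ⟨fun i => hDatom _ (D.get_mem i),
    List.nodup_iff_injective_get.1 (List.nodup_dedup _), ?_⟩, fun i j => ?_⟩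
  · rw [List.ofFn_get]
    refine (listSup_le hDcompat fun z hz => nle_one_iff.2 (hDatom z hz).1).antisymm
      (hl.trans (listSup_mono (pairwise_compat_map_inv_mul _) hDcompat fun z hz => ?_))
    by_cases hz0 : z = 0
    · exact Or.inl hz0
    · exact Or.inr (List.mem_dedup.2 (List.mem_filter.2 ⟨hz, decide_eq_true hz0⟩))
  · obtain ⟨u, hu, hu'⟩ := hD _ (D.get_mem i)
    obtain ⟨v, hv, hv'⟩ := hD _ (D.get_mem j)
    rw [← hu, ← hv]
    exact exists_arrow_of_mul_inv_eq (hu'.trans hv'.symm)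

open Classical in
noncomputable def conjIndex {n : ℕ} (d : Fin n → S) (s : S) (i : Fin n) : Option (Fin n) :=
  if h : ∃ j, s⁻¹ * d i * s = d j then some h.choose else none

theorem conjIndex_eq_some_iff {n : ℕ} {d : Fin n → S} (hd : Function.Injective d) {s : S}
    {i j : Fin n} : conjIndex d s i = some j ↔ s⁻¹ * d i * s = d j := by
  unfold conjIndex
  split_ifs with h
  · rw [Option.some_inj]
    exact ⟨fun hj => hj ▸ h.choose_spec, fun hj => hd (h.choose_spec.symm.trans hj)⟩
  · simp only [false_iff]
    exact fun hj => h ⟨j, hj⟩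

namespace IsAtomPartition

variable {n : ℕ} {d : Fin n → S}

theorem compat (hP : IsAtomPartition d) (i j : Fin n) : Compat (d i) (d j) :=
  compat_of_isIdempotentElem (hP.isIdemAtom i).1 (hP.isIdemAtom j).1

theorem mul_eq_zero (hP : IsAtomPartition d) {i j : Fin n} (h : i ≠ j) : d i * d j = 0 :=
  by_contra fun h' => h (hP.injective ((hP.isIdemAtom i).eq_of_mul_ne_zero (hP.isIdemAtom j) h'))

theorem exists_eq (hP : IsAtomPartition d) {f : S} (hf : IsIdemAtom f) : ∃ i, d i = f := by
  by_contra! hne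
  refine hf.ne_zero ?_
  calc f = f * listSup (List.ofFn d) := by rw [hP.listSup_eq_one, mul_one]
    _ = listSup (List.ofFn fun i => f * d i) := mul_listSup_ofFn hP.compat f
    _ = 0 := listSup_eq_zero <| List.forall_mem_ofFn_iff.2 fun i =>
      by_contra fun h => hne i (hf.eq_of_mul_ne_zero (hP.isIdemAtom i) h).symm

theorem conj_eq_zero_or_exists (hP : IsAtomPartition d) (s : S) (i : Fin n) :
    s⁻¹ * d i * s = 0 ∨ ∃ j, s⁻¹ * d i * s = d j :=
  ((hP.isIdemAtom i).conj s).imp_right fun h => (hP.exists_eq h).imp fun _ => Eq.symm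

theorem eq_of_forall_mul_eq (hP : IsAtomPartition d) {s t : S} (h : ∀ i, d i * s = d i * t) :
    s = t :=
  calc s = listSup (List.ofFn d) * s := by rw [hP.listSup_eq_one, one_mul]
    _ = listSup (List.ofFn fun i => d i * t) := by rw [listSup_ofFn_mul hP.compat]; simp only [h]
    _ = t := by rw [← listSup_ofFn_mul hP.compat, hP.listSup_eq_one, one_mul]

theorem mul_listSup_ofFn_eq (hP : IsAtomPartition d) {V : Fin n → S} (hV : ∀ i, d i * V i = V i)
    (hc : ∀ i j, Compat (V i) (V j)) (i : Fin n) : d i * listSup (List.ofFn V) = V i := by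
  rw [mul_listSup_ofFn hc, listSup_ofFn_eq_apply _ i, hV]
  intro k hk
  rw [← hV k, ← mul_assoc, hP.mul_eq_zero hk.symm, zero_mul]

noncomputable def atomAction (hP : IsAtomPartition d) (s : S) : PEquiv (Fin n) (Fin n) where
  toFun := conjIndex d s
  invFun := conjIndex d s⁻¹
  inv i j := by
    rw [conjIndex_eq_some_iff hP.injective, conjIndex_eq_some_iff hP.injective, inv_inv]
    exact ((hP.isIdemAtom i).conj_eq_iff (hP.isIdemAtom j) s).symm

theorem atomAction_eq_some_iff (hP : IsAtomPartition d) {s : S} {i j : Fin n} :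
    hP.atomAction s i = some j ↔ s⁻¹ * d i * s = d j :=
  conjIndex_eq_some_iff hP.injective

theorem atomAction_eq_none_iff (hP : IsAtomPartition d) {s : S} {i : Fin n} :
    hP.atomAction s i = none ↔ s⁻¹ * d i * s = 0 := by
  rcases hP.conj_eq_zero_or_exists s i with h | ⟨j, h⟩
  · simp only [h, iff_true, Option.eq_none_iff_forall_ne_some]
    intro j hj
    rw [hP.atomAction_eq_some_iff, h] at hj
    exact (hP.isIdemAtom j).ne_zero hj.symm
  · rw [hP.atomAction_eq_some_iff.2 h, h]
    simp [(hP.isIdemAtom j).ne_zero]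

theorem atomAction_congr (hP : IsAtomPartition d) {s t : S} {i j : Fin n}
    (h : s⁻¹ * d i * s = t⁻¹ * d j * t) : hP.atomAction s i = hP.atomAction t j :=
  Option.ext fun k => by
    rw [hP.atomAction_eq_some_iff, hP.atomAction_eq_some_iff, h]

theorem atomAction_mul (hP : IsAtomPartition d) (a b : S) :
    hP.atomAction (a * b) = (hP.atomAction a).trans (hP.atomAction b) := by
  ext1 i
  have hconj : (a * b)⁻¹ * d i * (a * b) = b⁻¹ * (a⁻¹ * d i * a) * b := by simp [mul_assoc]
  change _ = (hP.atomAction a i).bind (hP.atomAction b)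
  rcases hP.conj_eq_zero_or_exists a i with ha | ⟨j, ha⟩
  · rw [hP.atomAction_eq_none_iff.2 ha, hP.atomAction_eq_none_iff.2 (by rw [hconj, ha]; simp),
      Option.bind_none]
  · rw [hP.atomAction_eq_some_iff.2 ha, Option.bind_some]
    exact hP.atomAction_congr (by rw [hconj, ha])

theorem atomAction_injective (hS : Fundamental S) (hP : IsAtomPartition d) :
    Function.Injective hP.atomAction := by
  intro s t h
  refine hP.eq_of_forall_mul_eq fun i => hS.mul_eq_of_conj_eq (hP.isIdemAtom i) ?_
  have hi : hP.atomAction s i = hP.atomAction t i := by rw [h]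
  rcases hP.conj_eq_zero_or_exists s i with hs | ⟨j, hs⟩
  · rw [hs, eq_comm, ← hP.atomAction_eq_none_iff, ← hi, hP.atomAction_eq_none_iff, hs]
  · rw [hs, eq_comm, ← hP.atomAction_eq_some_iff, ← hi, hP.atomAction_eq_some_iff, hs]

theorem atomAction_surjective (hP : IsAtomPartition d)
    (hconn : ∀ i j, ∃ u : S, u⁻¹ * u = d j ∧ u * u⁻¹ = d i) :
    Function.Surjective hP.atomAction := by
  choose U hUd hUr using hconn
  intro π
  obtain ⟨V, hVnone, hVsome⟩ : ∃ V : Fin n → S,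
      (∀ i, π i = none → V i = 0) ∧ ∀ i j, π i = some j → V i = U i j :=
    ⟨fun i => (π i).elim 0 (U i), fun i h => by simp [h], fun i j h => by simp [h]⟩
  have hdV : ∀ i, d i * V i = V i := by
    intro i
    cases h : π i with
    | none => simp [hVnone i h]
    | some j => rw [hVsome i j h, ← hUr i j, mul_inv_mul]
  have hcompat : ∀ i i', Compat (V i) (V i') := by
    intro i i'
    by_cases hii : i = i'
    · exact hii ▸ Compat.refl _
    cases h : π i with
    | none => rw [hVnone i h]; exact compat_zero_left _
    | some j =>
      cases h' : π i' with
      | none => rw [hVnone i' h']; exact compat_zero_right _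
      | some j' =>
        have hjj : j ≠ j' := fun hjj => hii (π.inj h (hjj ▸ h'))
        rw [hVsome i j h, hVsome i' j' h']
        exact (orth_of_mul_eq_zero (by rw [hUr, hUr, hP.mul_eq_zero hii])
          (by rw [hUd, hUd, hP.mul_eq_zero hjj])).compat
  refine ⟨listSup (List.ofFn V), PEquiv.ext fun i => ?_⟩
  have hconj : (listSup (List.ofFn V))⁻¹ * d i * listSup (List.ofFn V) = (V i)⁻¹ * V i := by
    rw [(hP.isIdemAtom i).1.conj_eq_inv_mul, hP.mul_listSup_ofFn_eq hdV hcompat]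
  cases h : π i with
  | none => rw [hP.atomAction_eq_none_iff, hconj, hVnone i h]; simp
  | some j => rw [hP.atomAction_eq_some_iff, hconj, hVsome i j h, hUd]

end IsAtomPartition

end DistributiveInverseMonoid

theorem statement5_general (S : Type u) [BooleanInverseMeetMonoid S]
    (hf : Fundamental S) (h0 : ZeroSimplifying S) :
    IdemAtomless S ∨
      ∃ (n : ℕ) (φ : S ≃ PEquiv (Fin n) (Fin n)),
        ∀ a b : S, φ (a * b) = (φ a).trans (φ b) := by
  by_cases hA : IdemAtomless S
  · exact Or.inl hA
  obtain ⟨e, he⟩ := InverseMonoidWithZero.exists_isIdemAtom_of_not_idemAtomless hA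
  obtain ⟨l, hl⟩ := h0.one_mem_pencilIdeal he.isIdempotentElem he.ne_zero
  rw [InverseMonoidWithZero.inv_one, one_mul] at hl
  obtain ⟨n, d, hP, hconn⟩ := DistributiveInverseMonoid.exists_isAtomPartition he hl
  exact Or.inr ⟨n, Equiv.ofBijective _
    ⟨hP.atomAction_injective hf, hP.atomAction_surjective hconn⟩, hP.atomAction_mul⟩

/-- A fundamental, 0-simplifying, countable Boolean inverse
∧-monoid is either a Tarski monoid (its Boolean algebra of idempotents is
atomless) or isomorphic to a finite symmetric inverse monoid, i.e. the inverse
monoid of all partial bijections of `{1, …, n}` under composition. -/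
theorem statement5 (S : Type u) [BooleanInverseMeetMonoid S] [Countable S]
    (hf : Fundamental S) (h0 : ZeroSimplifying S) :
    IdemAtomless S ∨
      ∃ (n : ℕ) (φ : S ≃ PEquiv (Fin n) (Fin n)),
        ∀ a b : S, φ (a * b) = (φ a).trans (φ b) :=
  statement5_general S hf h0
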